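/- With D := Σ_U − Σ_{UB}Aᵀ, Q := Σ_U − Σ_{UB}Aᵀ − A Σ_{UB}ᵀ + A Σ_B Aᵀ invertible and symmetric, and Σ_U, Σ_B symmetric, the identity A Σ̃_B Aᵀ = Σ_U − D Q⁻¹ Dᵀ holds, where Σ̃_B := Σ_B − (Σ_{UB}ᵀ − Σ_B Aᵀ) Q⁻¹ (Σ_{UB}ᵀ − Σ_B Aᵀ)ᵀ. -/
import Mathlib


open Matrix

theorem reconciled_upper_covariance_identity
    {m u : ℕ}
    (A : Matrix (Fin u) (Fin m) ℝ)
    (SU : Matrix (Fin u) (Fin u) ℝ)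
    (SB : Matrix (Fin m) (Fin m) ℝ)
    (SUB : Matrix (Fin u) (Fin m) ℝ)
    (hSU : SU.IsSymm) (hSB : SB.IsSymm)
    (Q : Matrix (Fin u) (Fin u) ℝ)
    (hQdef : Q = SU - SUB * Aᵀ - A * SUBᵀ + A * SB * Aᵀ)
    (hQsymm : Q.IsSymm)
    (hQ : IsUnit Q.det)
    (D : Matrix (Fin u) (Fin u) ℝ)
    (hD : D = SU - SUB * Aᵀ)
    (SBrec : Matrix (Fin m) (Fin m) ℝ)
    (hrec : SBrec = SB - (SUBᵀ - SB * Aᵀ) * Q⁻¹ * (SUBᵀ - SB * Aᵀ)ᵀ) :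
    A * SBrec * Aᵀ = SU - D * Q⁻¹ * Dᵀ := by
  have hQ1 : Q * Q⁻¹ = 1 := Matrix.mul_nonsing_inv Q hQ
  have hQ2 : Q⁻¹ * Q = 1 := Matrix.nonsing_inv_mul Q hQ
  have hQT : Qᵀ = Q := hQsymm
  set E := A * (SUBᵀ - SB * Aᵀ) with hEdef
  have hE : E = D - Q := by
    rw [hEdef, hD, hQdef, Matrix.mul_sub]
    simp only [Matrix.mul_assoc]; abel
  have hEt : Eᵀ = Dᵀ - Q := by rw [hE, Matrix.transpose_sub, hQT]
  have key : A * SBrec * Aᵀ = A * SB * Aᵀ - E * Q⁻¹ * Eᵀ := by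
    rw [hrec, hEdef, Matrix.transpose_mul]
    simp only [Matrix.mul_sub, Matrix.sub_mul, Matrix.mul_assoc]
  have expand : (D - Q) * Q⁻¹ * (Dᵀ - Q) = D * Q⁻¹ * Dᵀ - D - Dᵀ + Q := by
    rw [Matrix.sub_mul, hQ1, Matrix.sub_mul, Matrix.mul_sub, Matrix.mul_sub,
      Matrix.mul_assoc D Q⁻¹ Q, hQ2, Matrix.mul_one, Matrix.one_mul,
      Matrix.one_mul]
    abel
  have hDt : Dᵀ = SU - A * SUBᵀ := by
    rw [hD, Matrix.transpose_sub, hSU, Matrix.transpose_mul,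
      Matrix.transpose_transpose]
  rw [key, hEt, hE, expand, hDt, hD, hQdef]
  abel
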